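/- Let A be an N×N Hermitian complex matrix, λ1 > 0, and ψ a unit vector with A ψ = λ1 ψ, supported on a set M with |M| = χ ≥ 1. Let λ2 satisfy 0 ≤ λ2 < λ1 and ‖A v‖ ≤ λ2 ‖v‖ for all v orthogonal to ψ, and set γ = (λ1 − λ2)/λ1. Let φ be a nonzero vector with ⟨ψ, φ⟩ ≠ 0, let k ≥ χ, ρ = √(χ/k), let F ⊆ Fin N with |F| = k be a set of heaviest indices of A φ, and define ω by ω(x) = (A φ)(x) for x ∈ F and ω(x) = 0 otherwise. If ρ(1−γ)T(φ) < 1, then ⟨ψ, ω⟩ ≠ 0 and T(ω) ≤ ((1−γ)T(φ) + ρ)/(1 − ρ(1−γ)T(φ)). -/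

import Mathlib

open Matrix Finset

/-- The standard Hermitian inner product on `ι → ℂ`, conjugate-linear in the
first argument. -/
noncomputable def cinner {ι : Type*} [Fintype ι] (v w : ι → ℂ) : ℂ :=
  ∑ i, (starRingEnd ℂ) (v i) * w i

/-- The Euclidean norm on `ι → ℂ`. -/
noncomputable def cnorm {ι : Type*} [Fintype ι] (v : ι → ℂ) : ℝ :=
  Real.sqrt (∑ i, Complex.normSq (v i))

/-- Tangent of the angle between `v` and a fixed unit vector `ψ`:
`T(v) = ‖v − ⟨ψ, v⟩ψ‖ / |⟨ψ, v⟩|`. -/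
noncomputable def tang {N : ℕ} (ψ v : Fin N → ℂ) : ℝ :=
  cnorm (v - cinner ψ v • ψ) / ‖cinner ψ v‖

local notation "⟪" x ", " y "⟫" => @inner ℂ _ _ x y

private lemma sq_le_imp {x y : ℝ} (hx : 0 ≤ x) (hy : 0 ≤ y) (h : x^2 ≤ y^2) : x ≤ y := by
  calc x = Real.sqrt (x^2) := (Real.sqrt_sq hx).symm
    _ ≤ Real.sqrt (y^2) := Real.sqrt_le_sqrt h
    _ = y := Real.sqrt_sq hy

private lemma sq_eq_imp {x y : ℝ} (hx : 0 ≤ x) (hy : 0 ≤ y) (h : x^2 = y^2) : x = y :=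
  le_antisymm (sq_le_imp hx hy h.le) (sq_le_imp hy hx h.ge)

set_option maxHeartbeats 1000000 in
private theorem trunc_aux {E : Type*} [NormedAddCommGroup E] [InnerProductSpace ℂ E]
    (ψ ω r : E) (hψ1 : ‖ψ‖ = 1)
    (horth : ⟪ω, r⟫ = 0)
    (c' : ℂ) (hc0 : c' ≠ 0) (hin : ⟪ψ, ω + r⟫ = c')
    (b' ρ : ℝ) (hρ0 : 0 ≤ ρ)
    (hb : ‖ω + r - c' • ψ‖ ≤ b')
    (hrr : ‖r‖ ≤ ρ * ‖ω‖)
    (hsm : ρ * b' < ‖c'‖) :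
    ⟪ψ, ω⟫ ≠ 0 ∧
      ‖ω - ⟪ψ, ω⟫ • ψ‖ / ‖(⟪ψ, ω⟫ : ℂ)‖ ≤ (b' + ρ * ‖c'‖) / (‖c'‖ - ρ * b') := by
  set a := ‖c'‖ with ha_def
  have ha : 0 < a := norm_pos_iff.mpr hc0
  have hb0 : 0 ≤ b' := le_trans (norm_nonneg _) hb
  set z' := ω + r with hz'_def
  set n := ‖ω‖ with hn_def
  set δ := ‖r‖ with hδ_def
  set b₀ := ‖z' - c' • ψ‖ with hb₀_def
  set s := ‖z'‖ with hs_def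
  have hδ0 : 0 ≤ δ := norm_nonneg _
  have hb₀0 : 0 ≤ b₀ := norm_nonneg _
  have hb₀b : b₀ ≤ b' := hb
  have hω0 : ω ≠ 0 := by
    intro h
    have h1 : δ ≤ 0 := by simpa [h, hn_def] using hrr
    have h2 : r = 0 := norm_le_zero_iff.mp (by rw [hδ_def] at h1; exact h1)
    exact hc0 (by rw [← hin, hz'_def, h, h2]; simp)
  have hn : 0 < n := norm_pos_iff.mpr hω0
  have hs1 : s^2 = n^2 + δ^2 := by
    have h := norm_add_sq (𝕜 := ℂ) ω r
    rw [horth] at h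
    simpa [hz'_def] using h
  have hψψ : ⟪ψ, ψ⟫ = (1:ℂ) := by
    rw [inner_self_eq_norm_sq_to_K, hψ1]; norm_num
  have hperp : ⟪ψ, z' - c' • ψ⟫ = 0 := by
    rw [inner_sub_right, inner_smul_right, hin, hψψ]; ring
  have hs2 : s^2 = a^2 + b₀^2 := by
    have hzz : c' • ψ + (z' - c' • ψ) = z' := by abel
    have h := norm_add_sq (𝕜 := ℂ) (c' • ψ) (z' - c' • ψ)
    rw [hzz, inner_smul_left, hperp, mul_zero] at h
    simpa [norm_smul, hψ1] using h
  have hspos : 0 < s := by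
    have h2 : 0 < s^2 := by rw [hs1]; positivity
    have h3 : 0 ≤ s := hs_def ▸ norm_nonneg z'
    nlinarith
  have hsC0 : ((s:ℝ):ℂ) ≠ 0 := Complex.ofReal_ne_zero.mpr hspos.ne'
  have hsC : ((s:ℂ))^2 ≠ 0 := pow_ne_zero 2 hsC0
  have hinner_zz : ⟪z', z'⟫ = ((s:ℂ))^2 := by
    rw [inner_self_eq_norm_sq_to_K, ← hs_def]; norm_cast
  set q : ℂ := ⟪z', ψ⟫ / ((s:ℂ)^2) with hq_def
  have hzψ : ⟪z', ψ⟫ = (starRingEnd ℂ) c' := by rw [← inner_conj_symm, hin]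
  set ψp := ψ - q • z' with hψp_def
  have hzψp : ⟪z', ψp⟫ = 0 := by
    rw [hψp_def, inner_sub_right, inner_smul_right, hinner_zz, hq_def,
      div_mul_cancel₀ _ hsC, sub_self]
  have hωz : ⟪ω, z'⟫ = ((n:ℂ))^2 := by
    rw [hz'_def, inner_add_right, horth, add_zero, inner_self_eq_norm_sq_to_K, ← hn_def]
    norm_cast
  have hcc : (starRingEnd ℂ) c' * c' = ((a^2 : ℝ) : ℂ) := by
    rw [mul_comm, Complex.mul_conj, Complex.normSq_eq_norm_sq, ← ha_def]
  -- norm of ψp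
  have hψp_norm : ‖ψp‖ = b₀ / s := by
    have h1 : q * c' = (((a^2/s^2 : ℝ)) : ℂ) := by
      rw [hq_def, hzψ, div_mul_eq_mul_div, hcc]; push_cast; ring_nf
    have h := norm_sub_sq (𝕜 := ℂ) ψ (q • z')
    rw [inner_smul_right, hin, h1] at h
    simp only [RCLike.re_to_complex, Complex.ofReal_re] at h
    have h2 : ‖q • z'‖ = a / s := by
      rw [norm_smul, hq_def, norm_div, hzψ]
      simp only [RCLike.norm_conj]
      rw [← ha_def]
      rw [show ‖((s:ℂ))^2‖ = s^2 by rw [norm_pow]; simp [abs_of_nonneg hspos.le]]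
      rw [← hs_def]
      field_simp [hspos.ne']
    rw [h2, hψ1] at h
    apply sq_eq_imp (norm_nonneg _) (by positivity)
    rw [← hψp_def] at h
    rw [h]
    field_simp
    linear_combination hs2
  -- ωp
  set β : ℂ := ((n^2/s^2 : ℝ) : ℂ) with hβ_def
  set ωp := ω - β • z' with hωp_def
  have hωp_norm : ‖ωp‖ = n * δ / s := by
    have h1 : β * ((n:ℂ))^2 = (((n^2/s^2) * n^2 : ℝ) : ℂ) := by
      rw [hβ_def]; push_cast; ring_nf
    have h := norm_sub_sq (𝕜 := ℂ) ω (β • z')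
    rw [inner_smul_right, hωz, h1] at h
    rw [← hn_def] at h
    simp only [RCLike.re_to_complex, Complex.ofReal_re] at h
    have h2 : ‖β • z'‖ = (n^2/s^2) * s := by
      rw [norm_smul, hβ_def]
      rw [show ‖(((n^2/s^2 : ℝ)) : ℂ)‖ = n^2/s^2 by
        rw [Complex.norm_real]; exact abs_of_nonneg (by positivity)]
    rw [h2] at h
    apply sq_eq_imp (norm_nonneg _) (by positivity)
    rw [← hωp_def] at h
    rw [h]
    field_simp
    linear_combination hs1
  -- decomposition of inner
  have hψ_dec : ψp + q • z' = ψ := by rw [hψp_def]; abel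
  have hP_eq : ⟪ω, ψ⟫ = ⟪ωp, ψp⟫ + q * ((n:ℂ))^2 := by
    have hω_dec : ω = ωp + β • z' := by rw [hωp_def]; abel
    calc ⟪ω, ψ⟫ = ⟪ω, ψp + q • z'⟫ := by rw [hψ_dec]
      _ = ⟪ω, ψp⟫ + q * ⟪ω, z'⟫ := by rw [inner_add_right, inner_smul_right]
      _ = ⟪ωp + β • z', ψp⟫ + q * ((n:ℂ))^2 := by rw [← hω_dec, hωz]
      _ = ⟪ωp, ψp⟫ + q * ((n:ℂ))^2 := by
          rw [inner_add_left, inner_smul_left, hzψp, mul_zero, add_zero]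
  have hqn : ‖q * ((n:ℂ))^2‖ = a / s^2 * n^2 := by
    rw [norm_mul, hq_def, norm_div, hzψ]
    simp only [RCLike.norm_conj]
    rw [← ha_def]
    rw [show ‖((s:ℂ))^2‖ = s^2 by rw [norm_pow]; simp [abs_of_nonneg hspos.le]]
    rw [show ‖((n:ℂ))^2‖ = n^2 by rw [norm_pow]; simp [abs_of_nonneg hn.le]]
  have hCS : ‖(⟪ωp, ψp⟫ : ℂ)‖ ≤ (n * δ / s) * (b₀ / s) := by
    calc ‖(⟪ωp, ψp⟫ : ℂ)‖ ≤ ‖ωp‖ * ‖ψp‖ := norm_inner_le_norm _ _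
      _ = (n * δ / s) * (b₀ / s) := by rw [hωp_norm, hψp_norm]
  have hPlow : (a * n - δ * b₀) * n / s^2 ≤ ‖(⟪ψ, ω⟫ : ℂ)‖ := by
    have h1 : ‖(⟪ψ, ω⟫ : ℂ)‖ = ‖(⟪ω, ψ⟫ : ℂ)‖ := by
      rw [← inner_conj_symm ψ ω]; exact (RCLike.norm_conj _)
    have h2 : ‖q * ((n:ℂ))^2‖ ≤ ‖(⟪ω, ψ⟫ : ℂ)‖ + ‖(⟪ωp, ψp⟫ : ℂ)‖ := by
      calc ‖q * ((n:ℂ))^2‖ = ‖⟪ω, ψ⟫ - ⟪ωp, ψp⟫‖ := by rw [hP_eq]; congr 1; ring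
        _ ≤ ‖(⟪ω, ψ⟫ : ℂ)‖ + ‖(⟪ωp, ψp⟫ : ℂ)‖ := norm_sub_le _ _
    rw [h1]
    rw [hqn] at h2
    have h3 : (a * n - δ * b₀) * n / s^2 = a / s^2 * n^2 - (n * δ / s) * (b₀ / s) := by
      field_simp
    linarith [hCS]
  have hKpos : 0 < a * n - δ * b₀ := by
    have h1 : δ * b₀ ≤ (ρ * n) * b' :=
      mul_le_mul hrr hb₀b hb₀0 (mul_nonneg hρ0 hn.le)
    nlinarith [mul_pos hn (sub_pos.mpr hsm)]
  have hPpos : 0 < ‖(⟪ψ, ω⟫ : ℂ)‖ := by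
    calc (0:ℝ) < (a * n - δ * b₀) * n / s^2 := by positivity
      _ ≤ _ := hPlow
  refine ⟨norm_pos_iff.mp hPpos, ?_⟩
  set P : ℂ := ⟪ψ, ω⟫ with hP_def
  have hPn : ‖ω - P • ψ‖^2 = n^2 - ‖P‖^2 := by
    have h := norm_sub_sq (𝕜 := ℂ) ω (P • ψ)
    rw [inner_smul_right] at h
    have h1 : ⟪ω, ψ⟫ = (starRingEnd ℂ) P := by rw [← inner_conj_symm ω ψ, hP_def]
    rw [h1, Complex.mul_conj] at h
    rw [norm_smul, hψ1, mul_one] at h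
    rw [h, Complex.normSq_eq_norm_sq, ← hn_def]
    simp only [RCLike.re_to_complex, Complex.ofReal_re]
    ring
  have h4 : s^2 * s^2 = (a^2 + b₀^2) * (n^2 + δ^2) := by
    linear_combination (s^2) * hs1 + (n^2 + δ^2) * hs2
  have hT2 : ‖ω - P • ψ‖^2 ≤ (n * (b₀ * n + a * δ) / s^2)^2 := by
    have hKnn : 0 ≤ (a * n - δ * b₀) * n / s^2 := by positivity
    have hK2 : ((a * n - δ * b₀) * n / s^2)^2 ≤ ‖P‖^2 := pow_le_pow_left₀ hKnn hPlow 2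
    have hid : n^2 - ((a * n - δ * b₀) * n / s^2)^2 = (n * (b₀ * n + a * δ) / s^2)^2 := by
      field_simp
      linear_combination h4
    rw [hPn]
    linarith
  have hTle : ‖ω - P • ψ‖ ≤ n * (b₀ * n + a * δ) / s^2 :=
    sq_le_imp (norm_nonneg _) (by positivity) hT2
  have hdenpos : 0 < a - ρ * b' := sub_pos.mpr hsm
  rw [div_le_div_iff₀ hPpos hdenpos]
  have hmain : (b₀ * n + a * δ) * (a - ρ * b') ≤ (b' + ρ * a) * (a * n - δ * b₀) := by
    nlinarith [mul_nonneg (mul_nonneg ha.le hn.le) (sub_nonneg.2 hb₀b),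
      mul_nonneg (mul_nonneg hb0 hb₀0) (sub_nonneg.2 hrr),
      mul_nonneg (mul_nonneg (mul_nonneg hρ0 ha.le) hδ0) (sub_nonneg.2 hb₀b),
      mul_nonneg (mul_nonneg ha.le ha.le) (sub_nonneg.2 hrr)]
  calc ‖ω - P • ψ‖ * (a - ρ * b') ≤ (n * (b₀ * n + a * δ) / s^2) * (a - ρ * b') :=
        mul_le_mul_of_nonneg_right hTle hdenpos.le
    _ ≤ (b' + ρ * a) * ((a * n - δ * b₀) * n / s^2) := by
        rw [div_mul_eq_mul_div, ← mul_div_assoc]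
        apply (div_le_div_iff_of_pos_right (by positivity : (0:ℝ) < s^2)).mpr
        nlinarith [mul_le_mul_of_nonneg_left hmain hn.le]
    _ ≤ (b' + ρ * a) * ‖P‖ :=
        mul_le_mul_of_nonneg_left hPlow (by positivity)


noncomputable def toE {N : ℕ} (v : Fin N → ℂ) : EuclideanSpace ℂ (Fin N) := WithLp.toLp 2 v

private lemma cinner_eq {N : ℕ} (v w : Fin N → ℂ) :
    cinner v w = @inner ℂ (EuclideanSpace ℂ (Fin N)) _ (toE v) (toE w) := by
  simp [cinner, toE, PiLp.inner_apply, RCLike.inner_apply, mul_comm]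

private lemma cnorm_eq {N : ℕ} (v : Fin N → ℂ) : cnorm v = ‖toE v‖ := by
  rw [EuclideanSpace.norm_eq, cnorm]
  congr 1
  exact Finset.sum_congr rfl fun i _ => by
    rw [Complex.normSq_eq_norm_sq]; rfl

set_option maxHeartbeats 1000000 in
/-- The single-iteration recursion for the truncated power method: one
'multiply by `A`, truncate to the `k` heaviest entries' step maps the tangent
`T(φ)` to at most `((1−γ)T(φ) + ρ)/(1 − ρ(1−γ)T(φ))`. -/
theorem truncated_power_single_step {N : ℕ} (A : Matrix (Fin N) (Fin N) ℂ)
    (hHerm : A.IsHermitian)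
    (lam1 : ℝ) (hlam1 : 0 < lam1)
    (ψ : Fin N → ℂ) (hψ : cnorm ψ = 1)
    (hEig : A.mulVec ψ = (lam1 : ℂ) • ψ)
    (M : Finset (Fin N)) (χ : ℕ) (hM : M.card = χ) (hχ : 1 ≤ χ)
    (hsupp : ∀ x ∉ M, ψ x = 0)
    (lam2 : ℝ) (hlam2 : 0 ≤ lam2) (hlt : lam2 < lam1)
    (hcontr : ∀ v : Fin N → ℂ, cinner ψ v = 0 → cnorm (A.mulVec v) ≤ lam2 * cnorm v)
    (γ : ℝ) (hγ : γ = (lam1 - lam2) / lam1)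
    (φ : Fin N → ℂ) (hφ : φ ≠ 0) (hov : cinner ψ φ ≠ 0)
    (k : ℕ) (hk : χ ≤ k)
    (ρ : ℝ) (hρ : ρ = Real.sqrt ((χ : ℝ) / (k : ℝ)))
    (F : Finset (Fin N)) (hF : F.card = k)
    (hheavy : ∀ x ∈ F, ∀ y ∉ F,
      ‖A.mulVec φ y‖ ≤ ‖A.mulVec φ x‖)
    (ω : Fin N → ℂ) (hω : ω = fun x => if x ∈ F then A.mulVec φ x else 0)
    (hsmall : ρ * (1 - γ) * tang ψ φ < 1) :
    cinner ψ ω ≠ 0 ∧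
      tang ψ ω ≤ ((1 - γ) * tang ψ φ + ρ) / (1 - ρ * (1 - γ) * tang ψ φ) := by
  classical
  have hk1 : 1 ≤ k := le_trans hχ hk
  have hkR : (0:ℝ) < (k:ℝ) := by exact_mod_cast hk1
  set z := A.mulVec φ with hz_def
  set c := cinner ψ φ with hc_def
  have habsc : 0 < ‖c‖ := norm_pos_iff.mpr hov
  -- cinner ψ ψ = 1
  have hψsum : (∑ i, Complex.normSq (ψ i)) = 1 := by
    have h := hψ
    rw [cnorm, Real.sqrt_eq_one] at h
    exact h
  have hψψ : cinner ψ ψ = 1 := by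
    rw [cinner]
    have h1 : ∀ i : Fin N, (starRingEnd ℂ) (ψ i) * ψ i = ((Complex.normSq (ψ i) : ℝ) : ℂ) := by
      intro i; rw [mul_comm, Complex.mul_conj]
    rw [Finset.sum_congr rfl (fun i _ => h1 i)]
    exact_mod_cast congrArg (fun x : ℝ => (x : ℂ)) hψsum
  -- hermitian step
  have hA : ∀ v : Fin N → ℂ, cinner ψ (A.mulVec v) = (lam1:ℂ) * cinner ψ v := by
    intro v
    have hdot : ∀ w : Fin N → ℂ, cinner ψ w = star ψ ⬝ᵥ w := by
      intro w; simp [cinner, dotProduct]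
    rw [hdot, Matrix.dotProduct_mulVec]
    have h3 : Matrix.vecMul (star ψ) A = star ((lam1:ℂ) • ψ) := by
      conv_lhs => rw [← hHerm]
      rw [← Matrix.star_mulVec, hEig]
    rw [h3, star_smul, smul_dotProduct, ← hdot]
    simp [smul_eq_mul]
  set cp : ℂ := (lam1:ℂ) * c with hcp_def
  have hlam1C : ((lam1:ℝ):ℂ) ≠ 0 := by exact_mod_cast hlam1.ne'
  have hcp0 : cp ≠ 0 := mul_ne_zero hlam1C hov
  have habscp : ‖cp‖ = lam1 * ‖c‖ := by
    rw [hcp_def, norm_mul, Complex.norm_real, Real.norm_eq_abs,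
      abs_of_pos hlam1]
  set u := φ - c • ψ with hu_def
  have hcin_sub : ∀ v w₁ w₂ : Fin N → ℂ, cinner v (w₁ - w₂) = cinner v w₁ - cinner v w₂ := by
    intro v w₁ w₂
    simp only [cinner, Pi.sub_apply, mul_sub]
    exact Finset.sum_sub_distrib _ _
  have hcin_smul : ∀ (v w : Fin N → ℂ) (t : ℂ), cinner v (t • w) = t * cinner v w := by
    intro v w t
    simp only [cinner, Pi.smul_apply, smul_eq_mul, Finset.mul_sum]
    exact Finset.sum_congr rfl fun i _ => by ring
  have hu0 : cinner ψ u = 0 := by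
    rw [hu_def, hcin_sub, hcin_smul, hψψ, ← hc_def]
    ring
  have hAu : A.mulVec u = z - cp • ψ := by
    rw [hu_def, Matrix.mulVec_sub, Matrix.mulVec_smul, hEig, ← hz_def, smul_smul, hcp_def,
      mul_comm]
  have hinnz : cinner ψ z = cp := by
    rw [hz_def, hA φ, ← hc_def, hcp_def]
  have hb'bound : cnorm (z - cp • ψ) ≤ lam2 * cnorm u := by
    rw [← hAu]; exact hcontr u hu0
  -- the truncation data
  set r : Fin N → ℂ := fun x => if x ∈ M \ F then z x else 0 with hr_def
  have hsum : ∀ x, (ω + r) x = (if x ∈ F ∪ M then z x else 0) := by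
    intro x
    by_cases hxF : x ∈ F <;> by_cases hxM : x ∈ M <;>
      simp [hω, hr_def, Pi.add_apply, hxF, hxM, Finset.mem_sdiff, Finset.mem_union]
  have horth : cinner ω r = 0 := by
    rw [cinner]
    apply Finset.sum_eq_zero
    intro x _
    by_cases hxF : x ∈ F
    · have h0 : r x = 0 := by simp [hr_def, Finset.mem_sdiff, hxF]
      rw [h0, mul_zero]
    · have h0 : ω x = 0 := by simp [hω, hxF]
      rw [h0, map_zero, zero_mul]
  have hinz' : cinner ψ (ω + r) = cp := by
    rw [← hinnz, cinner, cinner]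
    apply Finset.sum_congr rfl
    intro x _
    rw [hsum x]
    by_cases hxFM : x ∈ F ∪ M
    · simp [hxFM]
    · have hxM : x ∉ M := fun h => hxFM (Finset.mem_union_right _ h)
      rw [hsupp x hxM]
      simp [hxFM]
  have hnorm_le : cnorm ((ω + r) - cp • ψ) ≤ cnorm (z - cp • ψ) := by
    rw [cnorm, cnorm]
    apply Real.sqrt_le_sqrt
    apply Finset.sum_le_sum
    intro x _
    by_cases hxFM : x ∈ F ∪ M
    · have h0 : (ω + r) x = z x := by rw [hsum x]; simp [hxFM]
      simp only [Pi.sub_apply, Pi.smul_apply, h0, smul_eq_mul, le_refl]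
    · have h1 : (ω + r) x = 0 := by rw [hsum x]; simp [hxFM]
      have h2 : ψ x = 0 := hsupp x (fun h => hxFM (Finset.mem_union_right _ h))
      simp [Pi.sub_apply, Pi.smul_apply, h1, h2, Complex.normSq_nonneg]
  -- heaviness
  have hheavy2 : ∀ y ∈ M \ F, ∀ x ∈ F, Complex.normSq (z y) ≤ Complex.normSq (z x) := by
    intro y hy x hx
    have h := hheavy x hx y (Finset.mem_sdiff.mp hy).2
    rw [Complex.normSq_eq_norm_sq, Complex.normSq_eq_norm_sq]
    exact pow_le_pow_left₀ (norm_nonneg _) h 2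
  have hsumF_nonneg : (0:ℝ) ≤ ∑ x ∈ F, Complex.normSq (z x) :=
    Finset.sum_nonneg fun x _ => Complex.normSq_nonneg _
  have hkey : (k:ℝ) * (∑ y ∈ M \ F, Complex.normSq (z y))
      ≤ (χ:ℝ) * ∑ x ∈ F, Complex.normSq (z x) := by
    calc (k:ℝ) * ∑ y ∈ M \ F, Complex.normSq (z y)
        = ∑ y ∈ M \ F, (k:ℝ) * Complex.normSq (z y) := Finset.mul_sum _ _ _
      _ ≤ ∑ y ∈ M \ F, ∑ x ∈ F, Complex.normSq (z x) := by
          apply Finset.sum_le_sum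
          intro y hy
          calc (k:ℝ) * Complex.normSq (z y) = ∑ _x ∈ F, Complex.normSq (z y) := by
                rw [Finset.sum_const, hF, nsmul_eq_mul]
            _ ≤ ∑ x ∈ F, Complex.normSq (z x) :=
                Finset.sum_le_sum (fun x hx => hheavy2 y hy x hx)
      _ = ((M \ F).card : ℝ) * ∑ x ∈ F, Complex.normSq (z x) := by
          rw [Finset.sum_const, nsmul_eq_mul]
      _ ≤ (χ:ℝ) * ∑ x ∈ F, Complex.normSq (z x) := by
          apply mul_le_mul_of_nonneg_right _ hsumF_nonneg
          have : (M \ F).card ≤ χ := hM ▸ Finset.card_le_card (Finset.sdiff_subset)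
          exact_mod_cast this
  have hω2 : cnorm ω ^ 2 = ∑ x ∈ F, Complex.normSq (z x) := by
    rw [cnorm, Real.sq_sqrt (Finset.sum_nonneg fun x _ => Complex.normSq_nonneg _)]
    have h1 : ∀ i : Fin N, Complex.normSq (ω i) = if i ∈ F then Complex.normSq (z i) else 0 := by
      intro i
      by_cases hi : i ∈ F <;> simp [hω, hi]
    rw [Finset.sum_congr rfl fun i _ => h1 i, Finset.sum_ite_mem, Finset.univ_inter]
  have hr2 : cnorm r ^ 2 = ∑ y ∈ M \ F, Complex.normSq (z y) := by
    rw [cnorm, Real.sq_sqrt (Finset.sum_nonneg fun x _ => Complex.normSq_nonneg _)]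
    have h1 : ∀ i : Fin N, Complex.normSq (r i)
        = if i ∈ M \ F then Complex.normSq (z i) else 0 := by
      intro i
      simp only [hr_def]
      by_cases hi : i ∈ M \ F
      · rw [if_pos hi, if_pos hi]
      · rw [if_neg hi, if_neg hi]; simp
    rw [Finset.sum_congr rfl fun i _ => h1 i, Finset.sum_ite_mem, Finset.univ_inter]
  have hρ0 : 0 ≤ ρ := hρ ▸ Real.sqrt_nonneg _
  have hrle : cnorm r ≤ ρ * cnorm ω := by
    have hρ2 : ρ^2 = (χ:ℝ)/(k:ℝ) := by rw [hρ, Real.sq_sqrt (by positivity)]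
    apply sq_le_imp (x := cnorm r) (y := ρ * cnorm ω) (Real.sqrt_nonneg _)
      (mul_nonneg hρ0 (Real.sqrt_nonneg _))
    rw [mul_pow, hρ2, hr2, hω2, div_mul_eq_mul_div, le_div_iff₀ hkR]
    linarith [hkey]
  -- translate to the inner product space
  have hγ' : (1:ℝ) - γ = lam2 / lam1 := by rw [hγ]; field_simp; ring
  have htφ : tang ψ φ = cnorm u / ‖c‖ := by rw [tang, ← hc_def, ← hu_def]
  have hxa : lam2 * cnorm u = ((1 - γ) * tang ψ φ) * ‖cp‖ := by
    rw [hγ', htφ, habscp]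
    field_simp
  have hsm : ρ * (lam2 * cnorm u) < ‖cp‖ := by
    rw [hxa]
    calc ρ * (((1 - γ) * tang ψ φ) * ‖cp‖) = (ρ * (1 - γ) * tang ψ φ) * ‖cp‖ := by ring
      _ < 1 * ‖cp‖ := by
          apply mul_lt_mul_of_pos_right hsmall
          rw [habscp]; positivity
      _ = ‖cp‖ := one_mul _
  have hb : cnorm ((ω + r) - cp • ψ) ≤ lam2 * cnorm u := le_trans hnorm_le hb'bound
  have main := trunc_aux (E := EuclideanSpace ℂ (Fin N)) (toE ψ) (toE ω) (toE r)
    (by rw [← cnorm_eq]; exact hψ)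
    (by rw [← cinner_eq]; exact horth)
    cp hcp0
    (by rw [show toE ω + toE r = toE (ω + r) from rfl, ← cinner_eq]; exact hinz')
    (lam2 * cnorm u) ρ hρ0
    (by rw [show toE ω + toE r - cp • toE ψ = toE ((ω + r) - cp • ψ) from rfl, ← cnorm_eq]
        exact hb)
    (by rw [← cnorm_eq, ← cnorm_eq]; exact hrle)
    (by exact hsm)
  obtain ⟨hP0, hPle⟩ := main
  constructor
  · rw [cinner_eq]; exact hP0
  · have hRHS : ((1 - γ) * tang ψ φ + ρ) / (1 - ρ * (1 - γ) * tang ψ φ)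
        = (lam2 * cnorm u + ρ * ‖cp‖) / (‖cp‖ - ρ * (lam2 * cnorm u)) := by
      have hcpne : ‖cp‖ ≠ 0 := by rw [habscp]; positivity
      rw [hxa]
      rw [show ((1 - γ) * tang ψ φ) * ‖cp‖ + ρ * ‖cp‖ = ((1 - γ) * tang ψ φ + ρ) * ‖cp‖ by ring]
      rw [show ‖cp‖ - ρ * (((1 - γ) * tang ψ φ) * ‖cp‖)
          = (1 - ρ * (1 - γ) * tang ψ φ) * ‖cp‖ by ring]
      rw [mul_div_mul_right _ _ hcpne]
    rw [hRHS, tang, cinner_eq, cnorm_eq]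
    rw [show toE (ω - (@inner ℂ (EuclideanSpace ℂ (Fin N)) _ (toE ψ) (toE ω)) • ψ)
        = toE ω - (@inner ℂ (EuclideanSpace ℂ (Fin N)) _ (toE ψ) (toE ω)) • toE ψ from rfl]
    exact hPle
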